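/- arXiv:2107.14058 — 2 statements merged into one kernel-verified Lean document; each statement's English description precedes it below -/
import Mathlib

section
/- Suppose F: (0,∞) → (0,∞) satisfies F(T) ~ e^{hT}/h as T → ∞ for some h > 0, π: (0,∞) → ℕ is non-decreasing, π(T) - π(y) ≤ F(T)/y for all 0 < y < T, and π(T)·e^{-σT} → 0 for every σ > h. Then limsup_{T→∞} π(T)·hT·e^{-hT} ≤ 1. -/
open Filter

/-- Upper-bound step in the prime geodesic theorem.  Suppose `F(T) ~ e^{hT}/h` as
`T → ∞`, `π` is non-decreasing, `π(T) - π(y) ≤ F(T)/y` for all `0 < y < T`, and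
`π(T) e^{-σT} → 0` for every `σ > h`.  Then `limsup_{T→∞} π(T) h T e^{-hT} ≤ 1`. -/
theorem pi_limsup_le_one
    (F : ℝ → ℝ) (π : ℝ → ℕ) (h : ℝ) (hh : 0 < h)
    (hFpos : ∀ T > (0 : ℝ), 0 < F T)
    (hFasym : Tendsto (fun T : ℝ => F T / (Real.exp (h * T) / h)) atTop (nhds 1))
    (hmono : ∀ y T : ℝ, 0 < y → y ≤ T → π y ≤ π T)
    (hineq : ∀ y T : ℝ, 0 < y → y < T → (π T : ℝ) - (π y : ℝ) ≤ F T / y)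
    (hdecay : ∀ σ > h, Tendsto (fun T : ℝ => (π T : ℝ) * Real.exp (-σ * T))
      atTop (nhds 0)) :
    limsup (fun T : ℝ => (π T : ℝ) * (h * T) * Real.exp (-h * T)) atTop ≤ 1 := by
  have key : ∀ c : ℝ, 1 < c →
      limsup (fun T : ℝ => (π T : ℝ) * (h * T) * Real.exp (-h * T)) atTop ≤ c := by
    intro c hc
    set σ : ℝ := h * (1 + c) / 2 with hσdef
    have hσh : h < σ := by rw [hσdef]; nlinarith
    have hσpos : 0 < σ := hh.trans hσh
    set y : ℝ → ℝ := fun T => (h * T - Real.log T) / σ with hy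
    clear_value y
    have hlog : Tendsto (fun T : ℝ => Real.log T / T) atTop (nhds 0) :=
      Real.isLittleO_log_id_atTop.tendsto_div_nhds_zero
    have hev1 : ∀ᶠ T in (atTop : Filter ℝ), Real.log T / T < h / 2 :=
      hlog.eventually_lt_const (by linarith)
    have hevy : ∀ᶠ T in (atTop : Filter ℝ), 0 < y T ∧ y T < T ∧ h / (2 * σ) * T ≤ y T := by
      filter_upwards [hev1, eventually_gt_atTop (1 : ℝ)] with T h1 hT1
      have hT0 : 0 < T := by linarith
      have hlogT : Real.log T < h / 2 * T := by
        have := (div_lt_iff₀ hT0).mp h1; linarith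
      have hlog0 : 0 ≤ Real.log T := Real.log_nonneg hT1.le
      have h2 : h / 2 * T ≤ h * T - Real.log T := by nlinarith
      refine ⟨?_, ?_, ?_⟩
      · rw [hy]; apply div_pos _ hσpos; nlinarith
      · rw [hy, div_lt_iff₀ hσpos]; nlinarith
      · rw [hy, le_div_iff₀ hσpos]
        calc h / (2 * σ) * T * σ = h / 2 * T := by field_simp
          _ ≤ h * T - Real.log T := h2
    have hytop : Tendsto y atTop atTop := by
      have hc0 : (0 : ℝ) < h / (2 * σ) := by positivity
      refine tendsto_atTop_mono' _ (hevy.mono fun T hT => hT.2.2) ?_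
      simpa using (tendsto_id : Tendsto (fun T : ℝ => T) atTop atTop).const_mul_atTop hc0
    -- the two limit pieces
    have hTend1 : Tendsto (fun T => (π (y T) : ℝ) * Real.exp (-σ * y T) * h) atTop
        (nhds 0) := by
      have := ((hdecay σ hσh).comp hytop).mul_const h
      simpa using this
    have hTy : Tendsto (fun T => T / y T) atTop (nhds (σ / h)) := by
      have hbase : Tendsto (fun T : ℝ => σ / (h - Real.log T / T)) atTop (nhds (σ / h)) := by
        have : Tendsto (fun T : ℝ => h - Real.log T / T) atTop (nhds h) := by
          simpa using (tendsto_const_nhds (x := h)).sub hlog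
        exact tendsto_const_nhds.div this hh.ne'
      refine hbase.congr' ?_
      filter_upwards [hevy, eventually_gt_atTop (0 : ℝ)] with T hTy hT0
      have hT : T ≠ 0 := hT0.ne'
      have hy0 : 0 < y T := hTy.1
      rw [hy] at hy0 ⊢
      simp only at hy0 ⊢
      have hnum : 0 < h * T - Real.log T := by
        have h1 := mul_pos hy0 hσpos
        rwa [div_mul_cancel₀ _ hσpos.ne'] at h1
      have hd1 : h - Real.log T / T ≠ 0 := by
        have heq : h - Real.log T / T = (h * T - Real.log T) / T := by
          field_simp
        rw [heq]
        positivity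
      field_simp
    have hTend2 : Tendsto (fun T => F T / (Real.exp (h * T) / h) * (T / y T)) atTop
        (nhds (σ / h)) := by
      have := hFasym.mul hTy
      simpa using this
    have hsum : Tendsto (fun T => (π (y T) : ℝ) * Real.exp (-σ * y T) * h
        + F T / (Real.exp (h * T) / h) * (T / y T)) atTop (nhds (σ / h)) := by
      simpa using hTend1.add hTend2
    have hσhc : σ / h < c := by
      rw [div_lt_iff₀ hh, hσdef]; nlinarith
    have hevlt : ∀ᶠ T in (atTop : Filter ℝ), (π (y T) : ℝ) * Real.exp (-σ * y T) * h
        + F T / (Real.exp (h * T) / h) * (T / y T) < c :=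
      hsum.eventually_lt_const hσhc
    -- pointwise bound
    have hevbd : ∀ᶠ T in (atTop : Filter ℝ),
        (π T : ℝ) * (h * T) * Real.exp (-h * T) ≤
        (π (y T) : ℝ) * Real.exp (-σ * y T) * h
          + F T / (Real.exp (h * T) / h) * (T / y T) := by
      filter_upwards [hevy, eventually_gt_atTop (0 : ℝ)] with T ⟨hy0, hyT, _⟩ hT0
      have hineq' : (π T : ℝ) ≤ (π (y T) : ℝ) + F T / y T := by
        have := hineq (y T) T hy0 hyT; linarith
      have hexp : Real.exp (σ * y T) = Real.exp (h * T) / T := by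
        have : σ * y T = h * T - Real.log T := by
          rw [hy]; field_simp
        rw [this, Real.exp_sub, Real.exp_log hT0]
      have hexpneg : Real.exp (-σ * y T) = T * Real.exp (-h * T) := by
        rw [neg_mul, neg_mul, Real.exp_neg, Real.exp_neg, hexp]
        field_simp
      have hnn : 0 ≤ h * T * Real.exp (-h * T) := by positivity
      calc (π T : ℝ) * (h * T) * Real.exp (-h * T)
          ≤ ((π (y T) : ℝ) + F T / y T) * (h * T) * Real.exp (-h * T) := by
            have := mul_le_mul_of_nonneg_right hineq' hnn
            calc (π T : ℝ) * (h * T) * Real.exp (-h * T)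
                = (π T : ℝ) * (h * T * Real.exp (-h * T)) := by ring
              _ ≤ ((π (y T) : ℝ) + F T / y T) * (h * T * Real.exp (-h * T)) := this
              _ = ((π (y T) : ℝ) + F T / y T) * (h * T) * Real.exp (-h * T) := by ring
        _ = (π (y T) : ℝ) * Real.exp (-σ * y T) * h
            + F T / (Real.exp (h * T) / h) * (T / y T) := by
            rw [hexpneg]
            have hE : Real.exp (h * T) ≠ 0 := (Real.exp_pos _).ne'
            have hyT0 : y T ≠ 0 := hy0.ne'
            have hEn : Real.exp (-h * T) = (Real.exp (h * T))⁻¹ := by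
              rw [neg_mul, Real.exp_neg]
            rw [hEn]
            field_simp
    refine limsup_le_of_le (isCoboundedUnder_le_of_eventually_le (x := 0) atTop ?_) ?_
    · exact (eventually_ge_atTop (0 : ℝ)).mono fun T hT => by positivity
    · filter_upwards [hevbd, hevlt] with T h1 h2
      exact h1.trans h2.le
  exact le_of_forall_gt_imp_ge_of_dense key
end

section
/- Let h > 0, d > 0, and suppose for a function L(R) ≥ 0 there exist, for all small δ > 0 and all 0 < ε ≪ δ, bounds V_{-δ}(R) ≤ L(R)·ε ≤ V_{δ}(R)/(1 - ε/(2d)) where V_{±δ}(R) ~ (C_{±δ}/h)·e^{hR}(1 - e^{-hε}) as R → ∞, and C_{±δ} → C as δ → 0. Then L(R) ~ C·e^{hR} as R → ∞. -/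
open Filter Set

private lemma annulus_cube_lo {C η a : ℝ} (hC : 0 < C) (ha : 0 < a) (ha' : a ≤ 1/16)
    (hη : 16*a ≤ η) : (1-η)*C < (1-a)*(C*(1-a))*(1-a) := by
  nlinarith [mul_pos hC ha, mul_pos (mul_pos hC ha) ha,
    mul_pos (mul_pos (mul_pos hC ha) ha) ha]

private lemma annulus_cube_hi {C η a e : ℝ} (hC : 0 < C) (ha : 0 < a) (ha' : a ≤ 1/16)
    (hη : 16*a ≤ η) (he : 0 < e) (hea : e < a) :
    (1+a)*(C*(1+a))*(1+a) < (1+η)*C*(1-e) := by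
  nlinarith [mul_nonneg (mul_nonneg hC.le (by linarith : (0:ℝ) ≤ η - 16*a))
      (by linarith : (0:ℝ) ≤ 1-e),
    mul_pos (mul_pos hC (by linarith : (0:ℝ) < 1+16*a)) (by linarith : (0:ℝ) < a - e),
    mul_pos hC ha, mul_pos (mul_pos hC ha) ha, mul_pos (mul_pos (mul_pos hC ha) ha) ha]

set_option maxHeartbeats 1000000

/-- **Annulus sandwich lemma** (abstract form of the approximation step in Theorem B).
Let `h, d > 0` and `L(R) ≥ 0`.  Suppose for all small `δ > 0` and all sufficiently
small `ε > 0` (depending on `δ`) one has the sandwich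
`V_{-δ}(ε,R) ≤ L(R)·ε ≤ V_{δ}(ε,R)/(1 - ε/(2d))` for all `R > 0`, where
`V_{±δ}(ε,R) ~ (C_{±δ}/h) e^{hR} (1 - e^{-hε})` as `R → ∞`, and `C_δ → C > 0` as
`δ → 0` (`δ ≠ 0`).  Then `L(R) ~ C e^{hR}` as `R → ∞`. -/
theorem annulus_sandwich (h d C : ℝ) (hh : 0 < h) (hd : 0 < d) (hC : 0 < C)
    (L : ℝ → ℝ) (hL : ∀ R, 0 ≤ L R)
    (Cδ : ℝ → ℝ) (hCδpos : ∀ δ : ℝ, δ ≠ 0 → 0 < Cδ δ)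
    (V : ℝ → ℝ → ℝ → ℝ)
    (hsandwich : ∃ δ₀ > (0 : ℝ), ∀ δ ∈ Ioo (0 : ℝ) δ₀, ∃ ε₀ > (0 : ℝ),
      ∀ ε ∈ Ioo (0 : ℝ) ε₀,
        (∀ R > (0 : ℝ),
          V (-δ) ε R ≤ L R * ε ∧ L R * ε ≤ V δ ε R / (1 - ε / (2 * d))) ∧
        (∀ s : ℝ, s = δ ∨ s = -δ →
          Tendsto (fun R : ℝ =>
              V s ε R / ((Cδ s / h) * Real.exp (h * R) * (1 - Real.exp (-h * ε))))
            atTop (nhds 1)))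
    (hClim : Tendsto Cδ (nhdsWithin 0 {x : ℝ | x ≠ 0}) (nhds C)) :
    Tendsto (fun R : ℝ => L R / (C * Real.exp (h * R))) atTop (nhds 1) := by
  obtain ⟨δ₀, hδ₀, hs⟩ := hsandwich
  rw [Metric.tendsto_nhds]
  intro η hη
  set η' : ℝ := min η 1 / 2 with hη'def
  have hminpos : 0 < min η 1 := lt_min hη one_pos
  have hη'pos : 0 < η' := by positivity
  have hη'half : η' ≤ 1 / 2 := by
    have : min η 1 ≤ 1 := min_le_right _ _
    simp only [hη'def]; linarith
  have h2η : 2 * η' ≤ η := by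
    have : min η 1 ≤ η := min_le_left _ _
    simp only [hη'def]; linarith
  -- choose δ
  obtain ⟨δ₁, hδ₁, hCnear⟩ :=
    Metric.tendsto_nhdsWithin_nhds.1 hClim (C * η' / 8) (by positivity)
  set δ : ℝ := min δ₀ δ₁ / 2 with hδdef
  have hminδ : 0 < min δ₀ δ₁ := lt_min hδ₀ hδ₁
  have hδpos : 0 < δ := by positivity
  have hδlt₀ : δ < δ₀ := by
    have : min δ₀ δ₁ ≤ δ₀ := min_le_left _ _
    simp only [hδdef]; linarith
  have hδlt₁ : δ < δ₁ := by
    have : min δ₀ δ₁ ≤ δ₁ := min_le_right _ _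
    simp only [hδdef]; linarith
  have hCd : |Cδ δ - C| < C * η' / 8 := by
    have := hCnear (x := δ) (ne_of_gt hδpos)
      (by rw [Real.dist_eq, sub_zero, abs_of_pos hδpos]; exact hδlt₁)
    rwa [Real.dist_eq] at this
  have hCdn : |Cδ (-δ) - C| < C * η' / 8 := by
    have := hCnear (x := -δ) (by simpa using ne_of_gt hδpos)
      (by rw [Real.dist_eq, sub_zero, abs_neg, abs_of_pos hδpos]; exact hδlt₁)
    rwa [Real.dist_eq] at this
  obtain ⟨ε₀, hε₀, hεall⟩ := hs δ ⟨hδpos, hδlt₀⟩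
  -- the limit (1 - e^{-hε})/(hε) → 1 as ε → 0⁺
  have hmap : Tendsto (fun ε : ℝ => -h * ε) (nhdsWithin 0 (Ioi 0))
      (nhdsWithin 0 {x : ℝ | x ≠ 0}) := by
    rw [tendsto_nhdsWithin_iff]
    constructor
    · have : Tendsto (fun ε : ℝ => -h * ε) (nhds 0) (nhds (-h * 0)) :=
        (continuous_const.mul continuous_id).tendsto 0
      simpa using this.mono_left nhdsWithin_le_nhds
    · filter_upwards [self_mem_nhdsWithin] with x hx
      have hx0 : (0 : ℝ) < x := hx
      exact ne_of_lt (mul_neg_of_neg_of_pos (neg_lt_zero.2 hh) hx0)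
  have hf : Tendsto (fun ε : ℝ => (1 - Real.exp (-h * ε)) / (h * ε))
      (nhdsWithin 0 (Ioi 0)) (nhds 1) := by
    have hslope := hasDerivAt_iff_tendsto_slope.mp (Real.hasDerivAt_exp 0)
    rw [Real.exp_zero] at hslope
    have := hslope.comp hmap
    refine this.congr' ?_
    filter_upwards [self_mem_nhdsWithin] with x hx
    have hx0 : (0 : ℝ) < x := hx
    have hhx : h * x ≠ 0 := by positivity
    show slope Real.exp 0 (-h * x) = (1 - Real.exp (-h * x)) / (h * x)
    rw [slope_def_field]
    rw [div_eq_div_iff (by simpa [neg_mul] using neg_ne_zero.2 hhx) hhx]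
    rw [Real.exp_zero]; ring
  have hgd : ∀ᶠ ε in nhdsWithin (0 : ℝ) (Ioi 0), ε / (2 * d) < η' / 8 := by
    have hcont : Tendsto (fun ε : ℝ => ε / (2 * d)) (nhds 0) (nhds (0 / (2 * d))) :=
      (continuous_id.div_const _).tendsto 0
    have := hcont.mono_left (nhdsWithin_le_nhds (s := Ioi (0:ℝ)))
    rw [zero_div] at this
    exact this.eventually (gt_mem_nhds (by positivity))
  have hfev : ∀ᶠ ε in nhdsWithin (0 : ℝ) (Ioi 0),
      |(1 - Real.exp (-h * ε)) / (h * ε) - 1| < η' / 8 := by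
    have := (Metric.tendsto_nhds.mp hf) (η' / 8) (by positivity)
    simpa [Real.dist_eq] using this
  have hIoo : Ioo (0 : ℝ) ε₀ ∈ nhdsWithin (0 : ℝ) (Ioi 0) :=
    Ioo_mem_nhdsGT_of_mem ⟨le_refl 0, hε₀⟩
  obtain ⟨ε, hεI, hFabs, hεd⟩ :=
    ((eventually_mem_set.2 hIoo).and (hfev.and hgd)).exists
  have hεpos : 0 < ε := hεI.1
  obtain ⟨hsw, hVt⟩ := hεall ε hεI
  have hVup := hVt δ (Or.inl rfl)
  have hVdn := hVt (-δ) (Or.inr rfl)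
  -- notation
  set A : ℝ := Real.exp (-h * ε) with hAdef
  set F : ℝ := (1 - A) / (h * ε) with hFdef
  have hA1 : A < 1 := by
    rw [hAdef, Real.exp_lt_one_iff]
    exact mul_neg_of_neg_of_pos (neg_lt_zero.2 hh) hεpos
  have h1A : 0 < 1 - A := by linarith
  have hhε : (0 : ℝ) < h * ε := mul_pos hh hεpos
  have hFpos : 0 < F := div_pos h1A hhε
  have hFmul : F * (h * ε) = 1 - A := div_mul_cancel₀ _ hhε.ne'
  have hF1 : 1 - η' / 8 < F := by
    have := abs_sub_lt_iff.1 hFabs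
    linarith [this.2]
  have hF2 : F < 1 + η' / 8 := by
    have := abs_sub_lt_iff.1 hFabs
    linarith [this.1]
  have hCdpos : 0 < Cδ δ := hCδpos δ (ne_of_gt hδpos)
  have hCdnpos : 0 < Cδ (-δ) := hCδpos (-δ) (by simpa using ne_of_gt hδpos)
  have hCd1 : Cδ δ < C * (1 + η' / 8) := by
    have := abs_sub_lt_iff.1 hCd
    nlinarith [this.1]
  have hCdn1 : C * (1 - η' / 8) < Cδ (-δ) := by
    have := abs_sub_lt_iff.1 hCdn
    nlinarith [this.2]
  have hden : 0 < 1 - ε / (2 * d) := by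
    have : ε / (2 * d) < η' / 8 := hεd
    linarith
  -- core numeric inequalities
  have coreLo : (1 - η) * C < (1 - η' / 8) * Cδ (-δ) * F := by
    have ha : 0 < 1 - η' / 8 := by linarith
    have t1 : (1 - η' / 8) * (C * (1 - η' / 8)) < (1 - η' / 8) * Cδ (-δ) :=
      mul_lt_mul_of_pos_left hCdn1 ha
    have t2 : (1 - η' / 8) * (C * (1 - η' / 8)) * (1 - η' / 8)
        < (1 - η' / 8) * Cδ (-δ) * F :=
      mul_lt_mul'' t1 hF1 (by positivity) ha.le
    exact lt_trans (annulus_cube_lo hC (by positivity) (by linarith) (by linarith)) t2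
  have coreHi : (1 + η' / 8) * Cδ δ * F < (1 + η) * C * (1 - ε / (2 * d)) := by
    have ha : 0 < 1 + η' / 8 := by linarith
    have t1 : (1 + η' / 8) * Cδ δ < (1 + η' / 8) * (C * (1 + η' / 8)) :=
      mul_lt_mul_of_pos_left hCd1 ha
    have t2 : (1 + η' / 8) * Cδ δ * F < (1 + η' / 8) * (C * (1 + η' / 8)) * (1 + η' / 8) :=
      mul_lt_mul'' t1 hF2 (by positivity) hFpos.le
    have hepos : 0 < ε / (2 * d) := by positivity
    exact lt_trans t2
      (annulus_cube_hi hC (by positivity) (by linarith) (by linarith) hepos hεd)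
  -- eventual bounds on the ratios
  have hgev := (Metric.tendsto_nhds.mp hVdn) (η' / 8) (by positivity)
  have huev := (Metric.tendsto_nhds.mp hVup) (η' / 8) (by positivity)
  filter_upwards [hgev, huev, eventually_gt_atTop (0 : ℝ)] with R hgR huR hR
  set E : ℝ := Real.exp (h * R) with hEdef
  have hE : 0 < E := Real.exp_pos _
  have hDlo : 0 < Cδ (-δ) / h * E * (1 - A) :=
    mul_pos (mul_pos (div_pos hCdnpos hh) hE) h1A
  have hDhi : 0 < Cδ δ / h * E * (1 - A) :=
    mul_pos (mul_pos (div_pos hCdpos hh) hE) h1A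
  rw [Real.dist_eq] at hgR huR
  have hg1 : 1 - η' / 8 < V (-δ) ε R / (Cδ (-δ) / h * E * (1 - A)) := by
    have := abs_sub_lt_iff.1 hgR
    linarith [this.2]
  have hu1 : V δ ε R / (Cδ δ / h * E * (1 - A)) < 1 + η' / 8 := by
    have := abs_sub_lt_iff.1 huR
    linarith [this.1]
  have hVdn_ge : (1 - η' / 8) * (Cδ (-δ) / h * E * (1 - A)) ≤ V (-δ) ε R := by
    have := mul_le_mul_of_nonneg_right hg1.le hDlo.le
    rwa [div_mul_cancel₀ _ hDlo.ne'] at this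
  have hVup_le : V δ ε R ≤ (1 + η' / 8) * (Cδ δ / h * E * (1 - A)) := by
    have := mul_le_mul_of_nonneg_right hu1.le hDhi.le
    rwa [div_mul_cancel₀ _ hDhi.ne'] at this
  have hDloEq : Cδ (-δ) / h * E * (1 - A) = Cδ (-δ) * F * (ε * E) := by
    rw [← hFmul]; field_simp
  have hDhiEq : Cδ δ / h * E * (1 - A) = Cδ δ * F * (ε * E) := by
    rw [← hFmul]; field_simp
  obtain ⟨hlow, hup⟩ := hsw R hR
  have hCE : 0 < C * E := mul_pos hC hE
  -- lower bound
  have hxlow : 1 - η < L R / (C * E) := by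
    rw [lt_div_iff₀ hCE]
    refine lt_of_mul_lt_mul_right (?_ : (1 - η) * (C * E) * ε < L R * ε) hεpos.le
    have step1 : (1 - η) * (C * E) * ε < (1 - η' / 8) * (Cδ (-δ) / h * E * (1 - A)) := by
      have hm := mul_lt_mul_of_pos_right coreLo (mul_pos hεpos hE)
      rw [hDloEq]
      calc (1 - η) * (C * E) * ε = (1 - η) * C * (ε * E) := by ring
        _ < (1 - η' / 8) * Cδ (-δ) * F * (ε * E) := hm
        _ = (1 - η' / 8) * (Cδ (-δ) * F * (ε * E)) := by ring
    calc (1 - η) * (C * E) * ε < (1 - η' / 8) * (Cδ (-δ) / h * E * (1 - A)) := step1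
      _ ≤ V (-δ) ε R := hVdn_ge
      _ ≤ L R * ε := hlow
  -- upper bound
  have hxup : L R / (C * E) < 1 + η := by
    rw [div_lt_iff₀ hCE]
    refine lt_of_mul_lt_mul_right (?_ : L R * ε < (1 + η) * (C * E) * ε) hεpos.le
    have step2 : (1 + η' / 8) * (Cδ δ / h * E * (1 - A)) / (1 - ε / (2 * d))
        < (1 + η) * (C * E) * ε := by
      rw [div_lt_iff₀ hden]
      have hm := mul_lt_mul_of_pos_right coreHi (mul_pos hεpos hE)
      rw [hDhiEq]
      calc (1 + η' / 8) * (Cδ δ * F * (ε * E)) = (1 + η' / 8) * Cδ δ * F * (ε * E) := by ring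
        _ < (1 + η) * C * (1 - ε / (2 * d)) * (ε * E) := hm
        _ = (1 + η) * (C * E) * ε * (1 - ε / (2 * d)) := by ring
    calc L R * ε ≤ V δ ε R / (1 - ε / (2 * d)) := hup
      _ ≤ (1 + η' / 8) * (Cδ δ / h * E * (1 - A)) / (1 - ε / (2 * d)) :=
          (div_le_div_iff_of_pos_right hden).2 hVup_le
      _ < (1 + η) * (C * E) * ε := step2
  rw [Real.dist_eq, abs_sub_lt_iff]
  constructor <;> linarith
end
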